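/- Let l ≥ 1 and m ≥ 1 be natural numbers, t ∈ ℝ, and let τ₀ > 0 satisfy m·τ₀ ≤ 1. Let ξ : ℝ → ℝ be (l+2)-times continuously differentiable on [t − lτ₀, t + mτ₀], and let B ≥ 0 satisfy |ξ^{(l+1)}(s)| ≤ B for all s ∈ [t, t + mτ₀]. Then there exists a constant C ≥ 0 such that for all τ ∈ (0, τ₀], |ξ(t + mτ) − P̄_l(t + mτ)| ≤ (B / (l+1)!) · (mτ)^{l+1} + τ · Σ_{p=1}^{l} |(ξ^{(p+1)}(t) / (p+1)!) · Σ_{j=0}^{p} (−1)^j · (p choose j) · (−j)^{p+1}| + C · τ², where P̄_l is the approximated Taylor polynomial of degree l at t with step τ. -/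

import Mathlib

/-- The backward-difference approximation of the `p`-th derivative of `ξ` at `t`
with step size `τ`: `∇^p_τ ξ(t) = τ^{-p} · Σ_{j=0}^{p} (-1)^j (p choose j) ξ(t - jτ)`. -/
noncomputable def bdApprox (ξ : ℝ → ℝ) (τ : ℝ) (p : ℕ) (t : ℝ) : ℝ :=
  τ ^ (-(p : ℤ)) *
    ∑ j ∈ Finset.range (p + 1), (-1 : ℝ) ^ j * (p.choose j : ℝ) * ξ (t - j * τ)

/-!
Expand `ξ` around `t` by Taylor's theorem with Lagrange remainder. At the target `t + mτ` the
remainder of order `l` is at most `B (mτ)^{l+1}/(l+1)!`. At the nodes `t - jτ` we expand to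
order `p + 1`: since `Σ_j (-1)^j (p choose j) (-j)^k` vanishes for `k < p` and equals `p!` for
`k = p`, the `p`-th backward difference picks out `ξ^{(p)}(t)`, the term of order `p + 1` gives
the explicit first-order error, and the remainders, controlled by a bound on `ξ^{(p+2)}` over the
compact interval, contribute `O(τ²)` after division by `τ^p`.
Since `mτ ≤ 1`, the weights `(mτ)^p / p!` do not enlarge these errors.
-/

open Finset Nat fwdDiff

theorem sum_range_neg_one_pow_mul_choose_mul_neg_pow {R : Type*} [CommRing R] {p k : ℕ}
    (hk : k ≤ p) :
    ∑ j ∈ range (p + 1), (-1 : R) ^ j * p.choose j * (-(j : R)) ^ k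
      = if k = p then (p ! : R) else 0 := by
  -- `Δ^[p]` of `x ↦ x ^ k` is constant; at `-p` the reflection `j ↦ p - j` yields our sum.
  have hΔ : (Δ_[1])^[p] (fun r : R ↦ r ^ k) (-p) = if k = p then (p ! : R) else 0 := by
    rcases hk.lt_or_eq with hlt | rfl
    · simp [fwdDiff_iter_pow_eq_zero_of_lt hlt, hlt.ne]
    · simp [fwdDiff_iter_eq_factorial]
  rw [← hΔ, fwdDiff_iter_eq_sum_shift, ← sum_range_reflect]
  refine sum_congr rfl fun j hj ↦ ?_
  have hjp : j ≤ p := Nat.lt_succ_iff.mp (mem_range.mp hj)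
  simp only [add_tsub_cancel_right, Nat.choose_symm hjp, Nat.cast_sub hjp, neg_sub, nsmul_eq_mul,
    mul_one, zsmul_eq_mul, Int.cast_mul, Int.cast_pow, Int.cast_neg, Int.cast_one, Int.cast_natCast]
  ring

theorem sum_neg_one_pow_mul_choose_mul_sum_range_pow {R : Type*} [CommRing R] (p : ℕ)
    (a : ℕ → R) (τ : R) :
    ∑ j ∈ range (p + 1), (-1 : R) ^ j * p.choose j * ∑ k ∈ range (p + 2), a k * (-j * τ) ^ k
      = τ ^ p * (p ! * a p + τ * (a (p + 1) *
          ∑ j ∈ range (p + 1), (-1 : R) ^ j * p.choose j * (-(j : R)) ^ (p + 1))) := by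
  have hswap : ∀ k, ∑ j ∈ range (p + 1), (-1 : R) ^ j * p.choose j * (a k * (-j * τ) ^ k)
      = a k * τ ^ k * ∑ j ∈ range (p + 1), (-1 : R) ^ j * p.choose j * (-(j : R)) ^ k := by
    intro k
    rw [mul_sum]
    exact sum_congr rfl fun j _ ↦ by ring
  have hlow : ∀ k ∈ range (p + 1),
      a k * τ ^ k * ∑ j ∈ range (p + 1), (-1 : R) ^ j * p.choose j * (-(j : R)) ^ k
        = if k = p then a k * τ ^ k * p ! else 0 := by
    intro k hk
    rw [sum_range_neg_one_pow_mul_choose_mul_neg_pow (Nat.lt_succ_iff.mp (mem_range.mp hk))]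
    split_ifs <;> simp
  simp_rw [mul_sum]
  rw [sum_comm, sum_range_succ]
  simp_rw [← mul_sum, hswap]
  rw [sum_congr rfl hlow, sum_ite_eq' _ _ _, if_pos (self_mem_range_succ p)]
  ring

theorem iteratedDerivWithin_subset {𝕜 F : Type*} [NontriviallyNormedField 𝕜]
    [NormedAddCommGroup F] [NormedSpace 𝕜 F] {f : 𝕜 → F} {s t : Set 𝕜} {n : ℕ} {x : 𝕜}
    (st : s ⊆ t) (hs : UniqueDiffOn 𝕜 s) (ht : UniqueDiffOn 𝕜 t) (hf : ContDiffOn 𝕜 n f t)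
    (hx : x ∈ s) :
    iteratedDerivWithin n f s x = iteratedDerivWithin n f t x := by
  simp only [iteratedDerivWithin_eq_iteratedFDerivWithin,
    iteratedFDerivWithin_subset st hs ht hf hx]

theorem taylorWithinEval_subset {f : ℝ → ℝ} {s t : Set ℝ} {n : ℕ} {x₀ x : ℝ}
    (st : s ⊆ t) (hs : UniqueDiffOn ℝ s) (ht : UniqueDiffOn ℝ t) (hf : ContDiffOn ℝ n f t)
    (hx₀ : x₀ ∈ s) :
    taylorWithinEval f n s x₀ x = taylorWithinEval f n t x₀ x := by
  simp only [taylor_within_apply]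
  refine sum_congr rfl fun k hk ↦ ?_
  rw [iteratedDerivWithin_subset st hs ht
    (hf.of_le (mod_cast Nat.lt_succ_iff.mp (mem_range.mp hk))) hx₀]

theorem abs_sub_taylorWithinEval_le {f : ℝ → ℝ} {s : Set ℝ} {n : ℕ} {x₀ x C : ℝ}
    (hs : UniqueDiffOn ℝ s) (hf : ContDiffOn ℝ (n + 1) f s) (hsub : Set.uIcc x₀ x ⊆ s)
    (hC : ∀ y ∈ Set.uIoo x₀ x, |iteratedDerivWithin (n + 1) f s y| ≤ C) :
    |f x - taylorWithinEval f n s x₀ x| ≤ C * |x - x₀| ^ (n + 1) / (n + 1)! := by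
  rcases eq_or_ne x₀ x with rfl | hne
  · simp [taylorWithinEval_self]
  have hu : UniqueDiffOn ℝ (Set.uIcc x₀ x) := uniqueDiffOn_uIcc hne
  have hfu : ContDiffOn ℝ (n + 1) f (Set.uIcc x₀ x) := hf.mono hsub
  obtain ⟨y, hy, hrem⟩ := taylor_mean_remainder_lagrange hne hfu.of_succ
    ((hfu.differentiableOn_iteratedDerivWithin (mod_cast n.lt_succ_self) hu).mono
      Set.uIoo_subset_uIcc_self)
  rw [← taylorWithinEval_subset hsub hu hs hf.of_succ Set.left_mem_uIcc, hrem,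
    iteratedDerivWithin_subset hsub hu hs (mod_cast hf) (Set.uIoo_subset_uIcc_self hy),
    abs_div, abs_mul, abs_pow, Nat.abs_cast]
  gcongr
  exact hC y hy

theorem taylorWithinEval_eq_add_sum_Icc (f : ℝ → ℝ) (n : ℕ) (s : Set ℝ) (x₀ x : ℝ) :
    taylorWithinEval f n s x₀ x
      = f x₀ + ∑ k ∈ Icc 1 n, iteratedDerivWithin k f s x₀ / k ! * (x - x₀) ^ k := by
  rw [taylor_within_apply, range_eq_Ico, sum_eq_sum_Ico_succ_bot n.succ_pos, zero_add,
    Nat.succ_eq_add_one, Ico_add_one_right_eq_Icc]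
  simp only [iteratedDerivWithin_zero, factorial_zero, cast_one, inv_one, pow_zero, mul_one,
    smul_eq_mul, one_mul]
  congr 1
  exact sum_congr rfl fun k _ ↦ by ring

theorem IsCompact.exists_bound_iteratedDerivWithin {𝕜 F : Type*} [NontriviallyNormedField 𝕜]
    [NormedAddCommGroup F] [NormedSpace 𝕜 F] {f : 𝕜 → F} {s : Set 𝕜} {n : ℕ}
    (hK : IsCompact s) (hs : UniqueDiffOn 𝕜 s) (hf : ContDiffOn 𝕜 n f s) :
    ∃ M, ∀ k ≤ n, ∀ y ∈ s, ‖iteratedDerivWithin k f s y‖ ≤ M := by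
  obtain ⟨M, hM⟩ := hK.exists_bound_of_continuousOn
    (f := fun y ↦ ∑ k ∈ range (n + 1), ‖iteratedDerivWithin k f s y‖)
    (continuousOn_finsetSum _ fun k hk ↦
      (hf.continuousOn_iteratedDerivWithin (mod_cast Nat.lt_succ_iff.mp (mem_range.mp hk))
        hs).norm)
  refine ⟨M, fun k hk y hy ↦ ?_⟩
  calc ‖iteratedDerivWithin k f s y‖
      ≤ ∑ k ∈ range (n + 1), ‖iteratedDerivWithin k f s y‖ :=
        single_le_sum (f := fun k ↦ ‖iteratedDerivWithin k f s y‖) (fun _ _ ↦ norm_nonneg _)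
          (mem_range.mpr (Nat.lt_succ_of_le hk))
    _ ≤ M := (le_abs_self _).trans (by simpa using hM y hy)

theorem abs_bdApprox_sub_iteratedDerivWithin_le {ξ : ℝ → ℝ} {s : Set ℝ} {p : ℕ} {t τ M : ℝ}
    (hs : UniqueDiffOn ℝ s) (hξ : ContDiffOn ℝ (p + 2) ξ s) (hτ : 0 < τ)
    (hsub : Set.Icc (t - p * τ) t ⊆ s)
    (hM : ∀ y ∈ Set.Icc (t - p * τ) t, |iteratedDerivWithin (p + 2) ξ s y| ≤ M) :
    |bdApprox ξ τ p t - iteratedDerivWithin p ξ s t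
        - τ * (iteratedDerivWithin (p + 1) ξ s t / (p + 1)! *
          ∑ j ∈ range (p + 1), (-1 : ℝ) ^ j * p.choose j * (-(j : ℝ)) ^ (p + 1))|
      ≤ M * (∑ j ∈ range (p + 1), p.choose j * (j : ℝ) ^ (p + 2)) / (p + 2)! * τ ^ 2 := by
  set T : ℝ → ℝ := taylorWithinEval ξ (p + 1) s t
  have hnode : ∀ j ∈ range (p + 1), Set.uIcc t (t - j * τ) ⊆ Set.Icc (t - p * τ) t := by
    intro j hj
    have : (j : ℝ) ≤ p := mod_cast Nat.lt_succ_iff.mp (mem_range.mp hj)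
    rw [Set.uIcc_of_ge (by nlinarith)]
    exact Set.Icc_subset_Icc_left (by nlinarith)
  have hrem : ∀ j ∈ range (p + 1),
      |ξ (t - j * τ) - T (t - j * τ)| ≤ M * ((j : ℝ) ^ (p + 2) * τ ^ (p + 2)) / (p + 2)! := by
    intro j hj
    have h := abs_sub_taylorWithinEval_le hs hξ ((hnode j hj).trans hsub)
      fun y hy ↦ hM y (hnode j hj (Set.uIoo_subset_uIcc_self hy))
    rwa [sub_sub_cancel_left, abs_neg, abs_mul, Nat.abs_cast, abs_of_pos hτ, mul_pow] at h
  have hT : ∀ j : ℕ, T (t - j * τ) = ∑ k ∈ range (p + 2),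
      iteratedDerivWithin k ξ s t / k ! * (-j * τ) ^ k := by
    intro j
    dsimp only [T]
    rw [taylor_within_apply]
    exact sum_congr rfl fun k _ ↦ by rw [smul_eq_mul]; ring
  have hsplit : bdApprox ξ τ p t - iteratedDerivWithin p ξ s t
        - τ * (iteratedDerivWithin (p + 1) ξ s t / (p + 1)! *
          ∑ j ∈ range (p + 1), (-1 : ℝ) ^ j * p.choose j * (-(j : ℝ)) ^ (p + 1))
      = (τ ^ p)⁻¹ * ∑ j ∈ range (p + 1),
          (-1 : ℝ) ^ j * p.choose j * (ξ (t - j * τ) - T (t - j * τ)) := by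
    simp_rw [mul_sub, sum_sub_distrib, hT]
    rw [sum_neg_one_pow_mul_choose_mul_sum_range_pow, bdApprox, zpow_neg, zpow_natCast]
    generalize ∑ j ∈ range (p + 1), (-1 : ℝ) ^ j * p.choose j * ξ (t - j * τ) = V
    field_simp
    ring
  rw [hsplit, abs_mul, abs_inv, abs_of_pos (pow_pos hτ p)]
  calc (τ ^ p)⁻¹ * |∑ j ∈ range (p + 1),
          (-1 : ℝ) ^ j * p.choose j * (ξ (t - j * τ) - T (t - j * τ))|
      ≤ (τ ^ p)⁻¹ * ∑ j ∈ range (p + 1),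
          p.choose j * (M * ((j : ℝ) ^ (p + 2) * τ ^ (p + 2)) / (p + 2)!) := by
        gcongr
        refine (abs_sum_le_sum_abs _ _).trans (sum_le_sum fun j hj ↦ ?_)
        rw [abs_mul, abs_mul, abs_pow, abs_neg, abs_one, one_pow, one_mul, Nat.abs_cast]
        exact mul_le_mul_of_nonneg_left (hrem j hj) (Nat.cast_nonneg _)
    _ = M * (∑ j ∈ range (p + 1), p.choose j * (j : ℝ) ^ (p + 2)) / (p + 2)! * τ ^ 2 := by
        simp_rw [mul_sum, sum_div, sum_mul]
        refine sum_congr rfl fun j _ ↦ ?_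
        field_simp
        ring

theorem abs_sum_sub_mul_le {ι : Type*} (s : Finset ι) {a b e K w : ι → ℝ} {τ : ℝ}
    (hτ : 0 ≤ τ) (hw : ∀ i ∈ s, 0 ≤ w i ∧ w i ≤ 1)
    (h : ∀ i ∈ s, |b i - a i - τ * e i| ≤ K i * τ ^ 2) :
    |∑ i ∈ s, (a i - b i) * w i| ≤ τ * ∑ i ∈ s, |e i| + (∑ i ∈ s, K i) * τ ^ 2 := by
  calc |∑ i ∈ s, (a i - b i) * w i|
      ≤ ∑ i ∈ s, |(a i - b i) * w i| := abs_sum_le_sum_abs _ _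
    _ ≤ ∑ i ∈ s, (τ * |e i| + K i * τ ^ 2) := sum_le_sum fun i hi ↦ ?_
    _ = τ * ∑ i ∈ s, |e i| + (∑ i ∈ s, K i) * τ ^ 2 := by
      rw [sum_add_distrib, mul_sum, sum_mul]
  have htri : |a i - b i| ≤ |b i - a i - τ * e i| + |τ * e i| := by
    rw [abs_sub_comm]
    simpa using abs_add_le (b i - a i - τ * e i) (τ * e i)
  rw [abs_mul, abs_of_nonneg hτ] at htri
  rw [abs_mul, abs_of_nonneg (hw i hi).1]
  calc |a i - b i| * w i ≤ |a i - b i| := mul_le_of_le_one_right (abs_nonneg _) (hw i hi).2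
    _ ≤ τ * |e i| + K i * τ ^ 2 := by linarith [h i hi]

theorem abs_sub_approxTaylor_le {ξ : ℝ → ℝ} {s : Set ℝ} {l : ℕ} {t h τ B M : ℝ}
    (hs : UniqueDiffOn ℝ s) (hξ : ContDiffOn ℝ (l + 2) ξ s) (hτ : 0 < τ) (h₀ : 0 ≤ h)
    (h₁ : h ≤ 1) (hsub : Set.Icc (t - l * τ) (t + h) ⊆ s)
    (hB : ∀ y ∈ Set.Ioo t (t + h), |iteratedDerivWithin (l + 1) ξ s y| ≤ B)
    (hM : ∀ p ≤ l, ∀ y ∈ Set.Icc (t - l * τ) t, |iteratedDerivWithin (p + 2) ξ s y| ≤ M) :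
    |ξ (t + h) - (ξ t + ∑ p ∈ Icc 1 l, bdApprox ξ τ p t / p ! * h ^ p)|
      ≤ B / (l + 1)! * h ^ (l + 1)
        + τ * ∑ p ∈ Icc 1 l, |iteratedDerivWithin (p + 1) ξ s t / (p + 1)! *
            ∑ j ∈ range (p + 1), (-1 : ℝ) ^ j * p.choose j * (-(j : ℝ)) ^ (p + 1)|
        + (∑ p ∈ Icc 1 l,
            M * (∑ j ∈ range (p + 1), p.choose j * (j : ℝ) ^ (p + 2)) / (p + 2)!) * τ ^ 2 := by
  have hlτ : 0 ≤ (l : ℝ) * τ := by positivity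
  have htaylor : |ξ (t + h) - taylorWithinEval ξ l s t (t + h)| ≤ B / (l + 1)! * h ^ (l + 1) := by
    have hsub' : Set.uIcc t (t + h) ⊆ s := by
      rw [Set.uIcc_of_le (by linarith)]
      exact (Set.Icc_subset_Icc_left (by linarith)).trans hsub
    have := abs_sub_taylorWithinEval_le (n := l) hs (hξ.of_le (by norm_cast; omega)) hsub'
      fun y hy ↦ hB y (by rwa [Set.uIoo_of_le (by linarith)] at hy)
    rwa [add_sub_cancel_left, abs_of_nonneg h₀, mul_div_right_comm] at this
  have hbd : ∀ p ∈ Icc 1 l, |bdApprox ξ τ p t - iteratedDerivWithin p ξ s t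
        - τ * (iteratedDerivWithin (p + 1) ξ s t / (p + 1)! *
          ∑ j ∈ range (p + 1), (-1 : ℝ) ^ j * p.choose j * (-(j : ℝ)) ^ (p + 1))|
      ≤ M * (∑ j ∈ range (p + 1), p.choose j * (j : ℝ) ^ (p + 2)) / (p + 2)! * τ ^ 2 := by
    intro p hp
    obtain ⟨-, hpl⟩ := Finset.mem_Icc.mp hp
    have hnodes : Set.Icc (t - p * τ) t ⊆ Set.Icc (t - l * τ) t :=
      Set.Icc_subset_Icc_left (by gcongr)
    exact abs_bdApprox_sub_iteratedDerivWithin_le hs (hξ.of_le (by norm_cast; omega)) hτ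
      (hnodes.trans ((Set.Icc_subset_Icc_right (by linarith)).trans hsub))
      fun y hy ↦ hM p hpl y (hnodes hy)
  have hweights : ∀ p ∈ Icc 1 l, 0 ≤ h ^ p / p ! ∧ h ^ p / p ! ≤ 1 := fun p _ ↦
    ⟨by positivity, div_le_one_of_le₀
      ((pow_le_one₀ h₀ h₁).trans (Nat.one_le_cast.mpr p.factorial_pos)) (by positivity)⟩
  have hsplit : ξ (t + h) - (ξ t + ∑ p ∈ Icc 1 l, bdApprox ξ τ p t / p ! * h ^ p)
      = (ξ (t + h) - taylorWithinEval ξ l s t (t + h)) + ∑ p ∈ Icc 1 l,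
          (iteratedDerivWithin p ξ s t - bdApprox ξ τ p t) * (h ^ p / p !) := by
    rw [taylorWithinEval_eq_add_sum_Icc, add_sub_cancel_left]
    simp_rw [sub_mul, sum_sub_distrib]
    ring_nf
  rw [hsplit]
  refine (abs_add_le _ _).trans ?_
  have := add_le_add htaylor (abs_sum_sub_mul_le _ hτ.le hweights hbd)
  linarith

theorem prediction_error_bound_general (l m : ℕ) (hl : 1 ≤ l)
    (t τ₀ : ℝ) (hτ₀ : 0 < τ₀) (hmτ₀ : (m : ℝ) * τ₀ ≤ 1) (ξ : ℝ → ℝ)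
    (hξ : ContDiffOn ℝ (l + 2) ξ (Set.Icc (t - l * τ₀) (t + m * τ₀)))
    (B : ℝ)
    (hbound : ∀ s ∈ Set.Icc t (t + m * τ₀),
      |iteratedDerivWithin (l + 1) ξ (Set.Icc (t - l * τ₀) (t + m * τ₀)) s| ≤ B) :
    ∃ C : ℝ, 0 ≤ C ∧ ∀ τ ∈ Set.Ioc (0 : ℝ) τ₀,
      |ξ (t + m * τ)
          - (ξ t + ∑ p ∈ Finset.Icc 1 l,
              bdApprox ξ τ p t / (p.factorial : ℝ) * ((m : ℝ) * τ) ^ p)|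
        ≤ B / ((l + 1).factorial : ℝ) * ((m : ℝ) * τ) ^ (l + 1)
          + τ * ∑ p ∈ Finset.Icc 1 l,
              |iteratedDerivWithin (p + 1) ξ (Set.Icc (t - l * τ₀) (t + m * τ₀)) t
                  / ((p + 1).factorial : ℝ) *
                ∑ j ∈ Finset.range (p + 1),
                  (-1 : ℝ) ^ j * (p.choose j : ℝ) * (-(j : ℝ)) ^ (p + 1)|
          + C * τ ^ 2 := by
  set S := Set.Icc (t - l * τ₀) (t + m * τ₀)
  have hlτ₀ : 0 < (l : ℝ) * τ₀ := by positivity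
  have hmτ₀_nonneg : 0 ≤ (m : ℝ) * τ₀ := by positivity
  have hξS : ContDiffOn ℝ (l + 2 : ℕ) ξ S := mod_cast hξ
  obtain ⟨M, hM⟩ :=
    isCompact_Icc.exists_bound_iteratedDerivWithin (uniqueDiffOn_Icc (by linarith)) hξS
  refine ⟨∑ p ∈ Icc 1 l, M * (∑ j ∈ range (p + 1), p.choose j * (j : ℝ) ^ (p + 2)) / (p + 2)!,
    sum_nonneg fun p _ ↦ ?_, fun τ ⟨hτ, hττ₀⟩ ↦ ?_⟩
  · have hM₀ : 0 ≤ M := (norm_nonneg _).trans (hM 0 (Nat.zero_le _) t ⟨by linarith, by linarith⟩)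
    positivity
  have hmτ_nonneg : 0 ≤ (m : ℝ) * τ := by positivity
  have hmτ : (m : ℝ) * τ ≤ m * τ₀ := by gcongr
  have hlτ : (l : ℝ) * τ ≤ l * τ₀ := by gcongr
  have hsub : Set.Icc (t - l * τ) (t + m * τ) ⊆ S := Set.Icc_subset_Icc (by linarith) (by linarith)
  exact abs_sub_approxTaylor_le (uniqueDiffOn_Icc (by linarith)) hξS hτ hmτ_nonneg
    (hmτ.trans hmτ₀) hsub (fun y hy ↦ hbound y ⟨hy.1.le, by linarith [hy.2]⟩)
    fun p hp y hy ↦ hM (p + 2) (by omega) y (hsub ⟨hy.1, by linarith [hy.2]⟩)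

/-- Paper's Theorem 2 (prediction error bound): the error of the approximated
Taylor polynomial prediction at `t + mτ` is bounded by the Taylor remainder of
order `(mτ)^{l+1}`, plus an explicit first-order term in `τ`, plus an `O(τ²)`
remainder, uniformly for `τ ∈ (0, τ₀]`. -/
theorem prediction_error_bound (l m : ℕ) (hl : 1 ≤ l) (hm : 1 ≤ m)
    (t τ₀ : ℝ) (hτ₀ : 0 < τ₀) (hmτ₀ : (m : ℝ) * τ₀ ≤ 1) (ξ : ℝ → ℝ)
    (hξ : ContDiffOn ℝ (l + 2) ξ (Set.Icc (t - l * τ₀) (t + m * τ₀)))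
    (B : ℝ) (hB : 0 ≤ B)
    (hbound : ∀ s ∈ Set.Icc t (t + m * τ₀),
      |iteratedDerivWithin (l + 1) ξ (Set.Icc (t - l * τ₀) (t + m * τ₀)) s| ≤ B) :
    ∃ C : ℝ, 0 ≤ C ∧ ∀ τ ∈ Set.Ioc (0 : ℝ) τ₀,
      |ξ (t + m * τ)
          - (ξ t + ∑ p ∈ Finset.Icc 1 l,
              bdApprox ξ τ p t / (p.factorial : ℝ) * ((m : ℝ) * τ) ^ p)|
        ≤ B / ((l + 1).factorial : ℝ) * ((m : ℝ) * τ) ^ (l + 1)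
          + τ * ∑ p ∈ Finset.Icc 1 l,
              |iteratedDerivWithin (p + 1) ξ (Set.Icc (t - l * τ₀) (t + m * τ₀)) t
                  / ((p + 1).factorial : ℝ) *
                ∑ j ∈ Finset.range (p + 1),
                  (-1 : ℝ) ^ j * (p.choose j : ℝ) * (-(j : ℝ)) ^ (p + 1)|
          + C * τ ^ 2 :=
  prediction_error_bound_general l m hl t τ₀ hτ₀ hmτ₀ ξ hξ B hbound
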